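/- arXiv:2011.03026 — 4 statements merged into one kernel-verified Lean document; each statement's English description precedes it below -/
import Mathlib

section
/- Let X_1,...,X_n be i.i.d. Bernoulli(p) random variables. For a tuple s of r distinct indices, let X_s = ∏_{u∈s} X_u and Z_s = X_s - p^r. Let s_1,...,s_L be tuples of r distinct indices each, with a = |⋃_j s̄_j|, such that for every i, s̄_i intersects ⋃_{j≠i} s̄_j. Then |E[Z_{s_1}···Z_{s_L}] - p^a| ≤ (2^L - 1) p^{a+1}. -/
/-!
Expanding `∏ j, (X_{s_j} - p^r)` over the set `T` of factors in which `X_{s_j}` is chosen gives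
`E[∏ j, Z_{s_j}] = ∑ T, p^|⋃_{j ∈ T} s̄_j| · (-p^r)^(L - |T|)`, since a product of indicators is the
indicator of the union. The term `T = univ` is `p^a`. For `T ≠ univ` pick `i ∉ T`: counting `s̄_i`
separately overcounts the union by at least one point because `s̄_i` meets the other sets, so the
exponent is at least `a + 1`, and each of the remaining `2^L - 1` terms is at most `p^(a+1)`.
-/

open Finset

noncomputable section

/-- Probability weight of an outcome `ω` of `n` i.i.d. Bernoulli(p) variables. -/
def wtI (n : ℕ) (p : ℝ) (ω : Fin n → Bool) : ℝ :=
  ∏ v : Fin n, if ω v then p else 1 - p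

/-- Expectation under `n` i.i.d. Bernoulli(p) variables. -/
def EI (n : ℕ) (p : ℝ) (f : (Fin n → Bool) → ℝ) : ℝ :=
  ∑ ω : Fin n → Bool, wtI n p ω * f ω

/-- `Z_s = X_s - p^r` where `X_s = ∏_{u ∈ s̄} X_u` for a tuple `s` of `r` distinct indices. -/
def Zt {n r : ℕ} (p : ℝ) (s : Fin r ↪ Fin n) (ω : Fin n → Bool) : ℝ :=
  (∏ u ∈ Finset.univ.map s, if ω u then (1 : ℝ) else 0) - p ^ r

lemma card_union_add_one_le {α : Type*} [DecidableEq α] {A B : Finset α}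
    (h : (A ∩ B).Nonempty) : (A ∪ B).card + 1 ≤ A.card + B.card := by
  have := card_union_add_card_inter A B
  have := h.card_pos
  omega

lemma card_biUnion_le_card_biUnion_add_sum {ι α : Type*} [DecidableEq ι] [DecidableEq α]
    (S T : Finset ι) (f : ι → Finset α) :
    (S.biUnion f).card ≤ (T.biUnion f).card + ∑ j ∈ S \ T, (f j).card := by
  calc (S.biUnion f).card ≤ (T.biUnion f ∪ (S \ T).biUnion f).card := by
        refine card_le_card fun x hx => ?_
        obtain ⟨j, hj, hx⟩ := mem_biUnion.mp hx
        by_cases hjT : j ∈ T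
        · exact mem_union_left _ (mem_biUnion.mpr ⟨j, hjT, hx⟩)
        · exact mem_union_right _ (mem_biUnion.mpr ⟨j, mem_sdiff.mpr ⟨hj, hjT⟩, hx⟩)
    _ ≤ (T.biUnion f).card + ((S \ T).biUnion f).card := card_union_le _ _
    _ ≤ (T.biUnion f).card + ∑ j ∈ S \ T, (f j).card := by gcongr; exact card_biUnion_le

lemma card_biUnion_univ_add_one_le {ι α : Type*} [Fintype ι] [DecidableEq ι] [DecidableEq α]
    (f : ι → Finset α) (hmeet : ∀ i, ∃ j, j ≠ i ∧ (f i ∩ f j).Nonempty)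
    {T : Finset ι} (hT : T ≠ univ) :
    (univ.biUnion f).card + 1 ≤ (T.biUnion f).card + ∑ j ∈ Tᶜ, (f j).card := by
  obtain ⟨i, hiT⟩ : ∃ i, i ∉ T := by simpa [eq_univ_iff_forall] using hT
  obtain ⟨j, hji, x, hx⟩ := hmeet i
  have hmeet_rest : (f i ∩ (univ.erase i).biUnion f).Nonempty :=
    ⟨x, mem_inter.mpr ⟨(mem_inter.mp hx).1,
      mem_biUnion.mpr ⟨j, mem_erase.mpr ⟨hji, mem_univ j⟩, (mem_inter.mp hx).2⟩⟩⟩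
  have hsplit : univ.biUnion f = f i ∪ (univ.erase i).biUnion f := by
    rw [← biUnion_insert, insert_erase (mem_univ i)]
  have hcompl : ∑ j ∈ Tᶜ, (f j).card = (f i).card + ∑ j ∈ univ.erase i \ T, (f j).card := by
    rw [erase_sdiff_comm, ← compl_eq_univ_sdiff, ← add_sum_erase _ _ (mem_compl.mpr hiT)]
  have := card_union_add_one_le hmeet_rest
  have := card_biUnion_le_card_biUnion_add_sum (univ.erase i) T f
  rw [hsplit, hcompl]
  omega

lemma prod_prod_boole_eq_prod_biUnion {ι α M₀ : Type*} [DecidableEq α] [CommMonoidWithZero M₀]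
    (P : α → Prop) [DecidablePred P] (T : Finset ι) (f : ι → Finset α) :
    ∏ j ∈ T, ∏ u ∈ f j, (if P u then (1 : M₀) else 0) = ∏ u ∈ T.biUnion f, if P u then 1 else 0 := by
  simp only [prod_boole, mem_biUnion]
  congr 1
  simp only [eq_iff_iff]
  grind

lemma EI_sum {n : ℕ} {p : ℝ} {ι : Type*} (S : Finset ι) (F : ι → (Fin n → Bool) → ℝ) :
    EI n p (fun ω => ∑ i ∈ S, F i ω) = ∑ i ∈ S, EI n p (F i) := by
  simp only [EI, mul_sum]
  exact sum_comm

lemma EI_mul_const {n : ℕ} {p : ℝ} (F : (Fin n → Bool) → ℝ) (c : ℝ) :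
    EI n p (fun ω => F ω * c) = EI n p F * c := by
  simp only [EI, sum_mul, mul_assoc]

lemma EI_prod_eq_prod_sum (n : ℕ) (p : ℝ) (g : Fin n → Bool → ℝ) :
    EI n p (fun ω => ∏ v, g v (ω v)) = ∏ v, ∑ b, (if b then p else 1 - p) * g v b := by
  rw [Fintype.prod_sum]
  simp only [EI, wtI, ← prod_mul_distrib]

lemma EI_prod_indicator (n : ℕ) (p : ℝ) (A : Finset (Fin n)) :
    EI n p (fun ω => ∏ u ∈ A, if ω u then (1 : ℝ) else 0) = p ^ A.card := by
  simp only [← Fintype.prod_ite_mem A]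
  rw [EI_prod_eq_prod_sum n p fun v b => if v ∈ A then (if b then 1 else 0) else 1, ← prod_const,
    ← Fintype.prod_ite_mem A]
  congr 1
  ext v
  by_cases hv : v ∈ A <;> simp [hv]

lemma EI_prod_Zt {n r L : ℕ} (p : ℝ) (s : Fin L → (Fin r ↪ Fin n)) :
    EI n p (fun ω => ∏ j, Zt p (s j) ω) =
      ∑ T : Finset (Fin L), p ^ (T.biUnion fun j => univ.map (s j)).card * (-p ^ r) ^ Tᶜ.card := by
  simp only [Zt, sub_eq_add_neg, Fintype.prod_add, prod_const, prod_prod_boole_eq_prod_biUnion]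
  rw [EI_sum]
  simp only [EI_mul_const, EI_prod_indicator]

/-- For tuples `s_1,…,s_L` of `r` distinct indices each, with `a = |⋃_j s̄_j|`, such that
every `s̄_i` meets `⋃_{j≠i} s̄_j`, one has `|E[Z_{s_1}⋯Z_{s_L}] - p^a| ≤ (2^L - 1) p^{a+1}`. -/
theorem stmt1 (n r L : ℕ) (p : ℝ) (hp0 : 0 ≤ p) (hp1 : p ≤ 1)
    (s : Fin L → (Fin r ↪ Fin n))
    (hmeet : ∀ i : Fin L, ∃ j : Fin L, j ≠ i ∧
      ((Finset.univ.map (s i)) ∩ (Finset.univ.map (s j))).Nonempty) :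
    |EI n p (fun ω => ∏ j : Fin L, Zt p (s j) ω) -
        p ^ (Finset.univ.biUnion fun j : Fin L => Finset.univ.map (s j)).card| ≤
      ((2 : ℝ) ^ L - 1) *
        p ^ ((Finset.univ.biUnion fun j : Fin L => Finset.univ.map (s j)).card + 1) := by
  set a := (univ.biUnion fun j : Fin L => univ.map (s j)).card
  have hterm : ∀ T ∈ (univ : Finset (Finset (Fin L))).erase univ,
      |p ^ (T.biUnion fun j => univ.map (s j)).card * (-p ^ r) ^ Tᶜ.card| ≤ p ^ (a + 1) := by
    intro T hT
    have hkey := card_biUnion_univ_add_one_le _ hmeet (ne_of_mem_erase hT)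
    simp only [card_map, card_univ, Fintype.card_fin, sum_const, smul_eq_mul] at hkey
    rw [abs_mul, abs_pow, abs_pow, abs_neg, abs_pow, abs_of_nonneg hp0, ← pow_mul, ← pow_add]
    exact pow_le_pow_of_le_one hp0 hp1 (by linarith [mul_comm r Tᶜ.card])
  rw [EI_prod_Zt, ← add_sum_erase _ _ (mem_univ univ), compl_univ, card_empty, pow_zero, mul_one,
    add_sub_cancel_left]
  calc _ ≤ _ := abs_sum_le_sum_abs _ _
    _ ≤ ∑ _T ∈ (univ : Finset (Finset (Fin L))).erase univ, p ^ (a + 1) := sum_le_sum hterm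
    _ = ((2 : ℝ) ^ L - 1) * p ^ (a + 1) := by
      rw [sum_const, card_erase_of_mem (mem_univ _), card_univ, Fintype.card_finset,
        Fintype.card_fin, nsmul_eq_mul, Nat.cast_sub Nat.one_le_two_pow]
      push_cast
      ring
end
end

section
/- Let X_1,...,X_n be i.i.d. Bernoulli(p) random variables with p ∈ [0,1], and let s_1, s_2 be two r-tuples of distinct indices with s̄_1 ∩ s̄_2 ≠ ∅ and a = |s̄_1 ∪ s̄_2|. Then E[(X_{s_1} - p^r)(X_{s_2} - p^r)] ≥ p^a (1 - p) ≥ 0. -/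
open Finset

noncomputable section

lemma EI_prod (n : ℕ) (p : ℝ) (T : Finset (Fin n)) :
    EI n p (fun ω => ∏ u ∈ T, if ω u then (1:ℝ) else 0) = p ^ T.card := by
  unfold EI wtI
  have h : ∀ ω : Fin n → Bool,
      (∏ v, if ω v then p else 1-p) * ∏ u ∈ T, (if ω u then (1:ℝ) else 0)
        = ∏ v, ((if ω v then p else 1-p) * (if v ∈ T then (if ω v then (1:ℝ) else 0) else 1)) := by
    intro ω
    rw [Finset.prod_mul_distrib]
    congr 1
    rw [Finset.prod_ite_mem, Finset.univ_inter]
  simp only [h]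
  have h2 := Finset.prod_univ_sum (fun _ : Fin n => (Finset.univ : Finset Bool))
    (fun v b => (if b then p else 1-p) * (if v ∈ T then (if b then (1:ℝ) else 0) else 1))
  rw [Fintype.piFinset_univ] at h2
  rw [← h2]
  have h3 : ∀ v : Fin n, (∑ b : Bool, (if b then p else 1-p) *
      (if v ∈ T then (if b then (1:ℝ) else 0) else 1)) = if v ∈ T then p else 1 := by
    intro v
    by_cases hv : v ∈ T <;> simp [hv] <;> ring
  simp only [h3]
  rw [Finset.prod_ite_mem, Finset.univ_inter, Finset.prod_const]

lemma EI_eq (n r : ℕ) (p : ℝ) (s₁ s₂ : Fin r ↪ Fin n) :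
    EI n p (fun ω => Zt p s₁ ω * Zt p s₂ ω)
      = p ^ ((Finset.univ.map s₁) ∪ (Finset.univ.map s₂)).card - p ^ (2 * r) := by
  set T₁ := Finset.univ.map s₁
  set T₂ := Finset.univ.map s₂
  have hexp : ∀ ω : Fin n → Bool, Zt p s₁ ω * Zt p s₂ ω
      = (∏ u ∈ T₁ ∪ T₂, if ω u then (1:ℝ) else 0)
        - p ^ r * (∏ u ∈ T₁, if ω u then (1:ℝ) else 0)
        - p ^ r * (∏ u ∈ T₂, if ω u then (1:ℝ) else 0)
        + p ^ r * p ^ r * (∏ u ∈ (∅ : Finset (Fin n)), if ω u then (1:ℝ) else 0) := by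
    intro ω
    have hub : ∀ S : Finset (Fin n), (∏ u ∈ S, if ω u then (1:ℝ) else 0)
        = if ∀ u ∈ S, ω u = true then (1:ℝ) else 0 := by
      intro S; simp [Finset.prod_boole]
    have hu : (∏ u ∈ T₁, if ω u then (1:ℝ) else 0) * (∏ u ∈ T₂, if ω u then (1:ℝ) else 0)
        = ∏ u ∈ T₁ ∪ T₂, if ω u then (1:ℝ) else 0 := by
      rw [hub, hub, hub]
      by_cases h1 : ∀ u ∈ T₁, ω u = true <;> by_cases h2 : ∀ u ∈ T₂, ω u = true
      · have h3 : ∀ u ∈ T₁ ∪ T₂, ω u = true := by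
          intro u hu
          rcases Finset.mem_union.mp hu with h | h
          exacts [h1 u h, h2 u h]
        rw [if_pos h1, if_pos h2, if_pos h3, one_mul]
      · have h3 : ¬ ∀ u ∈ T₁ ∪ T₂, ω u = true :=
          fun h => h2 fun u hu => h u (Finset.mem_union_right _ hu)
        rw [if_neg h2, if_neg h3, mul_zero]
      · have h3 : ¬ ∀ u ∈ T₁ ∪ T₂, ω u = true :=
          fun h => h1 fun u hu => h u (Finset.mem_union_left _ hu)
        rw [if_neg h1, if_neg h3, zero_mul]
      · have h3 : ¬ ∀ u ∈ T₁ ∪ T₂, ω u = true :=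
          fun h => h1 fun u hu => h u (Finset.mem_union_left _ hu)
        rw [if_neg h1, if_neg h3, zero_mul]
    unfold Zt
    simp only [Finset.prod_empty]
    rw [← hu]; ring
  unfold EI
  simp only [hexp, mul_sub, mul_add]
  rw [Finset.sum_add_distrib, Finset.sum_sub_distrib, Finset.sum_sub_distrib]
  have key : ∀ (S : Finset (Fin n)) (c : ℝ),
      (∑ ω : Fin n → Bool, wtI n p ω * (c * ∏ u ∈ S, if ω u then (1:ℝ) else 0))
        = c * p ^ S.card := by
    intro S c
    have := EI_prod n p S
    unfold EI at this
    rw [← this, Finset.mul_sum]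
    congr 1; ext ω; ring
  have key0 := EI_prod n p (T₁ ∪ T₂)
  unfold EI at key0
  rw [key0, key T₁ (p ^ r), key T₂ (p ^ r), key ∅ (p ^ r * p ^ r)]
  simp only [Finset.card_map, Finset.card_univ, Fintype.card_fin, Finset.card_empty, pow_zero,
    T₁, T₂]
  ring

/-- For two `r`-tuples of distinct indices with `s̄_1 ∩ s̄_2 ≠ ∅` and `a = |s̄_1 ∪ s̄_2|`,
`E[(X_{s_1} - p^r)(X_{s_2} - p^r)] ≥ p^a (1-p) ≥ 0`. -/
theorem stmt2 (n r : ℕ) (p : ℝ) (hp0 : 0 ≤ p) (hp1 : p ≤ 1)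
    (s₁ s₂ : Fin r ↪ Fin n)
    (hmeet : ((Finset.univ.map s₁) ∩ (Finset.univ.map s₂)).Nonempty) :
    p ^ ((Finset.univ.map s₁) ∪ (Finset.univ.map s₂)).card * (1 - p) ≤
      EI n p (fun ω => Zt p s₁ ω * Zt p s₂ ω) ∧
    0 ≤ p ^ ((Finset.univ.map s₁) ∪ (Finset.univ.map s₂)).card * (1 - p) := by
  set a := ((Finset.univ.map s₁) ∪ (Finset.univ.map s₂)).card with ha
  have hcard : a + ((Finset.univ.map s₁) ∩ (Finset.univ.map s₂)).card = 2 * r := by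
    rw [ha, Finset.card_union_add_card_inter]
    simp [two_mul]
  have hle : a + 1 ≤ 2 * r := by
    have := Finset.card_pos.mpr hmeet
    omega
  have hpow : p ^ (2 * r) ≤ p ^ (a + 1) := pow_le_pow_of_le_one hp0 hp1 hle
  constructor
  · rw [EI_eq]
    have : p ^ a * (1 - p) = p ^ a - p ^ (a + 1) := by ring
    rw [this]
    linarith
  · exact mul_nonneg (pow_nonneg hp0 a) (by linarith)
end
end

section
/- For every subset A of V(G), t_H(A)^2 = ∑_{A' ⊇ A} r_H(A')^2, where the sum is over all A' ⊆ V(G) containing A with |A'| ≤ |V(H)|. Consequently, for each K with 1 ≤ K ≤ |V(H)|, ∑_{A: |A| = K} t_H(A)^2 = ∑_{A': K ≤ |A'| ≤ |V(H)|} binom(|A'|, K) · r_H(A')^2. -/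
open Finset

noncomputable section

/-- `M_H(s) = ∏_{(i,j)∈E(H)} a_{s_i s_j}`: indicator that the tuple `s` of distinct
vertices maps every edge of `H` to an edge of `G`. -/
def MH {k : ℕ} {V : Type*} (H : SimpleGraph (Fin k)) [DecidableRel H.Adj]
    (G : SimpleGraph V) [DecidableRel G.Adj] (s : Fin k ↪ V) : ℝ :=
  ∏ i : Fin k, ∏ j : Fin k,
    if H.Adj i j then (if G.Adj (s i) (s j) then 1 else 0) else 1

/-- `N(H,G) = |Aut(H)|⁻¹ ∑_s M_H(s)`: the number of copies of `H` in `G`. -/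
def NHG {k : ℕ} {V : Type*} [Fintype V] [DecidableEq V] (H : SimpleGraph (Fin k))
    [DecidableRel H.Adj] (G : SimpleGraph V) [DecidableRel G.Adj] : ℝ :=
  (Nat.card (H ≃g H) : ℝ)⁻¹ * ∑ s : Fin k ↪ V, MH H G s

/-- `t_H(A)`: the number of copies of `H` in `G` whose vertex set contains `A`. -/
def tH {k : ℕ} {V : Type*} [Fintype V] [DecidableEq V] (H : SimpleGraph (Fin k))
    [DecidableRel H.Adj] (G : SimpleGraph V) [DecidableRel G.Adj] (A : Finset V) : ℝ :=
  (Nat.card (H ≃g H) : ℝ)⁻¹ *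
    ∑ s ∈ Finset.univ.filter (fun s : Fin k ↪ V => A ⊆ Finset.univ.map s), MH H G s

/-- Probability weight of a sampling outcome `ω : V → Bool` when each vertex is retained
independently with probability `p`. -/
def wt {V : Type*} [Fintype V] (p : ℝ) (ω : V → Bool) : ℝ :=
  ∏ v : V, if ω v then p else 1 - p

/-- Expectation under the subgraph sampling model with sampling ratio `p`. -/
def expec {V : Type*} [Fintype V] [DecidableEq V] (p : ℝ) (f : (V → Bool) → ℝ) : ℝ :=
  ∑ ω : V → Bool, wt p ω * f ω

/-- `X_s = ∏_{u ∈ s̄} X_u`: indicator that all entries of the tuple `s` are sampled. -/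
def Xs {k : ℕ} {V : Type*} (s : Fin k ↪ V) (ω : V → Bool) : ℝ :=
  ∏ u ∈ Finset.univ.map s, if ω u then 1 else 0

/-- `T(H,G) = |Aut(H)|⁻¹ ∑_s M_H(s) X_s`: the number of copies of `H` spanned by the
sampled vertices. -/
def TH {k : ℕ} {V : Type*} [Fintype V] [DecidableEq V] (H : SimpleGraph (Fin k))
    [DecidableRel H.Adj] (G : SimpleGraph V) [DecidableRel G.Adj] (ω : V → Bool) : ℝ :=
  (Nat.card (H ≃g H) : ℝ)⁻¹ * ∑ s : Fin k ↪ V, MH H G s * Xs s ω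

/-- `r_H(A)² = |Aut(H)|⁻² ∑_{s₁,s₂ : s̄₁ ∩ s̄₂ = A} M_H(s₁) M_H(s₂)`. -/
def rsq {k : ℕ} {V : Type*} [Fintype V] [DecidableEq V] (H : SimpleGraph (Fin k))
    [DecidableRel H.Adj] (G : SimpleGraph V) [DecidableRel G.Adj] (A : Finset V) : ℝ :=
  ((Nat.card (H ≃g H) : ℝ)⁻¹) ^ 2 *
    ∑ s₁ : Fin k ↪ V,
      ∑ s₂ ∈ Finset.univ.filter
        (fun s₂ : Fin k ↪ V => Finset.univ.map s₁ ∩ Finset.univ.map s₂ = A),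
        MH H G s₁ * MH H G s₂

/-- For every `A ⊆ V(G)`, `t_H(A)² = ∑_{A' ⊇ A, |A'| ≤ |V(H)|} r_H(A')²`; consequently,
for `1 ≤ K ≤ |V(H)|`,
`∑_{|A| = K} t_H(A)² = ∑_{A' : K ≤ |A'| ≤ |V(H)|} C(|A'|,K) r_H(A')²`. -/
theorem stmt8 {k : ℕ} {V : Type*} [Fintype V] [DecidableEq V]
    (H : SimpleGraph (Fin k)) [DecidableRel H.Adj] (hconn : H.Connected)
    (G : SimpleGraph V) [DecidableRel G.Adj] :
    (∀ A : Finset V,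
      tH H G A ^ 2 =
        ∑ A' ∈ (Finset.univ : Finset (Finset V)).filter
            (fun A' => A ⊆ A' ∧ A'.card ≤ k), rsq H G A') ∧
    (∀ K : ℕ, 1 ≤ K → K ≤ k →
      ∑ A ∈ (Finset.univ : Finset (Finset V)).filter (fun A => A.card = K),
          tH H G A ^ 2 =
        ∑ A' ∈ (Finset.univ : Finset (Finset V)).filter
            (fun A' => K ≤ A'.card ∧ A'.card ≤ k),
          (A'.card.choose K : ℝ) * rsq H G A') := by
  classical
  have part1 : ∀ A : Finset V,
      tH H G A ^ 2 =
        ∑ A' ∈ (Finset.univ : Finset (Finset V)).filter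
            (fun A' => A ⊆ A' ∧ A'.card ≤ k), rsq H G A' := by
    intro A
    have key : ∀ s₁ : Fin k ↪ V,
        ∑ A' ∈ (univ : Finset (Finset V)).filter (fun A' => A ⊆ A' ∧ A'.card ≤ k),
          ∑ s₂ ∈ univ.filter
              (fun s₂ : Fin k ↪ V => Finset.univ.map s₁ ∩ Finset.univ.map s₂ = A'),
            MH H G s₁ * MH H G s₂
        = ∑ s₂ ∈ univ.filter (fun s₂ : Fin k ↪ V =>
            A ⊆ Finset.univ.map s₁ ∧ A ⊆ Finset.univ.map s₂),
            MH H G s₁ * MH H G s₂ := by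
      intro s₁
      rw [Finset.sum_fiberwise_eq_sum_filter]
      congr 1
      ext s₂
      have hcard : (Finset.univ.map s₁ ∩ Finset.univ.map s₂).card ≤ k := by
        calc (Finset.univ.map s₁ ∩ Finset.univ.map s₂).card
            ≤ (Finset.univ.map s₁).card := card_le_card inter_subset_left
          _ = k := by simp
      simp [subset_inter_iff, hcard]
    calc tH H G A ^ 2
        = ((Nat.card (H ≃g H) : ℝ)⁻¹) ^ 2 *
            ∑ s₁ ∈ univ.filter (fun s : Fin k ↪ V => A ⊆ Finset.univ.map s),
              ∑ s₂ ∈ univ.filter (fun s : Fin k ↪ V => A ⊆ Finset.univ.map s),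
                MH H G s₁ * MH H G s₂ := by
          rw [tH, mul_pow]
          congr 1
          rw [sq, Finset.sum_mul_sum]
      _ = ((Nat.card (H ≃g H) : ℝ)⁻¹) ^ 2 *
            ∑ s₁ : Fin k ↪ V,
              ∑ s₂ ∈ univ.filter (fun s₂ : Fin k ↪ V =>
                A ⊆ Finset.univ.map s₁ ∧ A ⊆ Finset.univ.map s₂),
                MH H G s₁ * MH H G s₂ := by
          congr 1
          rw [Finset.sum_filter]
          refine Finset.sum_congr rfl fun s₁ _ => ?_
          by_cases h : A ⊆ Finset.univ.map s₁
          · simp only [h, if_true, true_and]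
          · simp [h, Finset.filter_false_of_mem]
      _ = ∑ A' ∈ (Finset.univ : Finset (Finset V)).filter
            (fun A' => A ⊆ A' ∧ A'.card ≤ k), rsq H G A' := by
          simp only [rsq]
          rw [eq_comm, ← Finset.mul_sum]
          congr 1
          rw [Finset.sum_comm]
          exact Finset.sum_congr rfl fun s₁ _ => key s₁
  refine ⟨part1, fun K hK1 hKk => ?_⟩
  have count : ∀ A' : Finset V,
      ((univ : Finset (Finset V)).filter (fun A => A.card = K ∧ A ⊆ A')).card
        = A'.card.choose K := by
    intro A'
    rw [← Finset.card_powersetCard]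
    congr 1
    ext B
    simp [Finset.mem_powersetCard, and_comm]
  calc ∑ A ∈ (univ : Finset (Finset V)).filter (fun A => A.card = K), tH H G A ^ 2
      = ∑ A : Finset V, ∑ A' : Finset V,
          if A.card = K ∧ (A ⊆ A' ∧ A'.card ≤ k) then rsq H G A' else 0 := by
        rw [Finset.sum_filter]
        refine Finset.sum_congr rfl fun A _ => ?_
        by_cases h : A.card = K
        · rw [part1 A, Finset.sum_filter]
          simp [h]
        · simp [h]
    _ = ∑ A' : Finset V, ∑ A : Finset V,
          if A.card = K ∧ (A ⊆ A' ∧ A'.card ≤ k) then rsq H G A' else 0 :=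
        Finset.sum_comm
    _ = ∑ A' ∈ (univ : Finset (Finset V)).filter
          (fun A' => K ≤ A'.card ∧ A'.card ≤ k),
          (A'.card.choose K : ℝ) * rsq H G A' := by
        rw [Finset.sum_filter]
        refine Finset.sum_congr rfl fun A' _ => ?_
        by_cases hk : A'.card ≤ k
        · have : ∀ A : Finset V,
              (if A.card = K ∧ (A ⊆ A' ∧ A'.card ≤ k) then rsq H G A' else 0)
                = if A.card = K ∧ A ⊆ A' then rsq H G A' else 0 := by
            intro A
            by_cases h : A.card = K ∧ A ⊆ A' <;> simp [h, hk]
          rw [Finset.sum_congr rfl fun A _ => this A, ← Finset.sum_filter,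
            Finset.sum_const, count A', nsmul_eq_mul]
          by_cases hKle : K ≤ A'.card
          · simp [hKle, hk]
          · push_neg at hKle
            simp [Nat.choose_eq_zero_of_lt hKle, hKle]
        · simp [hk]
end
end

section
/- Define β_H(p) = ∑_{K=1}^{|V(H)|} p^{2|V(H)| - K} ∑_{A: |A| = K} t_H(A)^2. Then (1 - p) β_H(p) / (2^{|V(H)|} - 1) ≤ Var[T(H,G)] ≤ β_H(p). -/
open Finset

noncomputable section

/-- `β_H(p) = ∑_{K=1}^{|V(H)|} p^{2|V(H)|-K} ∑_{|A|=K} t_H(A)²`. -/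
def betaH {k : ℕ} {V : Type*} [Fintype V] [DecidableEq V] (H : SimpleGraph (Fin k))
    [DecidableRel H.Adj] (G : SimpleGraph V) [DecidableRel G.Adj] (p : ℝ) : ℝ :=
  ∑ K ∈ Finset.Icc 1 k,
    p ^ (2 * k - K) *
      ∑ A ∈ (Finset.univ : Finset (Finset V)).filter (fun A => A.card = K),
        tH H G A ^ 2


lemma expec_ind {V : Type*} [Fintype V] [DecidableEq V] (p : ℝ) (S : Finset V) :
    ∑ ω : V → Bool, wt p ω * ∏ u ∈ S, (if ω u then (1:ℝ) else 0) = p ^ S.card := by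
  have h : ∀ ω : V → Bool, wt p ω * ∏ u ∈ S, (if ω u then (1:ℝ) else 0)
      = ∏ v : V, ((if ω v then p else 1 - p) * (if v ∈ S then (if ω v then (1:ℝ) else 0) else 1)) := by
    intro ω
    rw [Finset.prod_mul_distrib]
    congr 1
    rw [Finset.prod_ite_mem, Finset.univ_inter]
  simp only [h]
  rw [← Fintype.piFinset_univ,
    ← Finset.prod_univ_sum (fun _ : V => (Finset.univ : Finset Bool))
      (fun v b => (if b then p else 1 - p) * (if v ∈ S then (if b then (1:ℝ) else 0) else 1))]
  rw [show S.card = (Finset.univ ∩ S).card by rw [Finset.univ_inter]]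
  rw [← Finset.prod_const, ← Finset.prod_ite_mem Finset.univ S (fun _ => p)]
  apply Finset.prod_congr rfl
  intro v _
  by_cases hv : v ∈ S <;> simp [hv] <;> ring

lemma Xs_mul {k : ℕ} {V : Type*} [DecidableEq V] (s s' : Fin k ↪ V) (ω : V → Bool) :
    Xs s ω * Xs s' ω
      = ∏ u ∈ (Finset.univ.map s ∪ Finset.univ.map s'), if ω u then (1:ℝ) else 0 := by
  rw [Xs, Xs, Finset.prod_boole, Finset.prod_boole, Finset.prod_boole]
  have hiff : (∀ i ∈ Finset.univ.map s ∪ Finset.univ.map s', ω i = true) ↔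
      ((∀ a, ω (s a) = true) ∧ (∀ a, ω (s' a) = true)) := by
    constructor
    · intro h
      exact ⟨fun a => h _ (Finset.mem_union_left _ (Finset.mem_map_of_mem s (Finset.mem_univ a))),
             fun a => h _ (Finset.mem_union_right _ (Finset.mem_map_of_mem s' (Finset.mem_univ a)))⟩
    · rintro ⟨h1, h2⟩ i hi
      rcases Finset.mem_union.1 hi with h | h <;> obtain ⟨a, -, rfl⟩ := Finset.mem_map.1 h
      exacts [h1 a, h2 a]
  simp only [hiff]
  by_cases h1 : ∀ a : Fin k, ω (s a) = true <;>
    by_cases h2 : ∀ a : Fin k, ω (s' a) = true <;>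
      simp [h1, h2]

section Helpers

variable {k : ℕ} {V : Type*} [Fintype V] [DecidableEq V]
  (H : SimpleGraph (Fin k)) [DecidableRel H.Adj] (G : SimpleGraph V) [DecidableRel G.Adj]

lemma MH_nonneg (s : Fin k ↪ V) : 0 ≤ MH H G s := by
  unfold MH
  apply Finset.prod_nonneg; intro i _
  apply Finset.prod_nonneg; intro j _
  split_ifs <;> norm_num

lemma card_map_univ (s : Fin k ↪ V) : (Finset.univ.map s).card = k := by
  simp

lemma expec_Xs (p : ℝ) (s : Fin k ↪ V) :
    ∑ ω : V → Bool, wt p ω * Xs s ω = p ^ k := by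
  simp only [Xs]
  rw [expec_ind, card_map_univ]

lemma expec_TH (p : ℝ) :
    expec p (TH H G)
      = (Nat.card (H ≃g H) : ℝ)⁻¹ * ∑ s : Fin k ↪ V, MH H G s * p ^ k := by
  unfold expec TH
  have h1 : ∀ ω : V → Bool,
      wt p ω * ((Nat.card (H ≃g H) : ℝ)⁻¹ * ∑ s : Fin k ↪ V, MH H G s * Xs s ω)
        = ∑ s : Fin k ↪ V, ((Nat.card (H ≃g H) : ℝ)⁻¹ * MH H G s) * (wt p ω * Xs s ω) := by
    intro ω
    rw [Finset.mul_sum, Finset.mul_sum]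
    exact Finset.sum_congr rfl fun s _ => by ring
  simp only [h1]
  rw [Finset.sum_comm, Finset.mul_sum]
  apply Finset.sum_congr rfl; intro s _
  rw [← Finset.mul_sum, expec_Xs]
  ring

lemma expec_TH_sq (p : ℝ) :
    expec p (fun ω => TH H G ω ^ 2)
      = ((Nat.card (H ≃g H) : ℝ)⁻¹) ^ 2 * ∑ s : Fin k ↪ V, ∑ s' : Fin k ↪ V,
          MH H G s * MH H G s' * p ^ ((Finset.univ.map s ∪ Finset.univ.map s').card) := by
  unfold expec TH
  have h1 : ∀ ω : V → Bool,
      wt p ω * ((Nat.card (H ≃g H) : ℝ)⁻¹ * ∑ s : Fin k ↪ V, MH H G s * Xs s ω) ^ 2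
        = ∑ s : Fin k ↪ V, ∑ s' : Fin k ↪ V,
            (((Nat.card (H ≃g H) : ℝ)⁻¹) ^ 2 * (MH H G s * MH H G s'))
              * (wt p ω * (Xs s ω * Xs s' ω)) := by
    intro ω
    rw [mul_pow, pow_two (∑ s : Fin k ↪ V, MH H G s * Xs s ω), Finset.sum_mul_sum]
    rw [Finset.mul_sum, Finset.mul_sum]
    apply Finset.sum_congr rfl; intro s _
    rw [Finset.mul_sum, Finset.mul_sum]
    exact Finset.sum_congr rfl fun s' _ => by ring
  simp only [h1]
  rw [Finset.sum_comm, Finset.mul_sum]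
  apply Finset.sum_congr rfl; intro s _
  rw [Finset.sum_comm, Finset.mul_sum]
  apply Finset.sum_congr rfl; intro s' _
  rw [← Finset.mul_sum]
  have h2 : ∑ ω : V → Bool, wt p ω * (Xs s ω * Xs s' ω)
      = p ^ ((Finset.univ.map s ∪ Finset.univ.map s').card) := by
    simp only [Xs_mul]
    exact expec_ind p _
  rw [h2]
  ring

lemma var_decomp {W : Type*} [Fintype W] [DecidableEq W] (p : ℝ) (f : (W → Bool) → ℝ) :
    expec p (fun ω => (f ω - expec p f) ^ 2)
      = expec p (fun ω => f ω ^ 2) - (expec p f) ^ 2 := by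
  have hw : ∑ ω : W → Bool, wt p ω = 1 := by
    have h := expec_ind p (∅ : Finset W)
    simpa using h
  unfold expec
  set E := ∑ ω : W → Bool, wt p ω * f ω with hE
  have h : ∀ ω : W → Bool, wt p ω * (f ω - E) ^ 2
      = wt p ω * f ω ^ 2 - 2 * E * (wt p ω * f ω) + E ^ 2 * wt p ω := by
    intro ω; ring
  simp only [h]
  rw [Finset.sum_add_distrib, Finset.sum_sub_distrib, ← Finset.mul_sum, ← Finset.mul_sum, hw,
    ← hE]
  ring

end Helpers

section Formulas

variable {k : ℕ} {V : Type*} [Fintype V] [DecidableEq V]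
  (H : SimpleGraph (Fin k)) [DecidableRel H.Adj] (G : SimpleGraph V) [DecidableRel G.Adj]

lemma var_eq (p : ℝ) :
    expec p (fun ω => (TH H G ω - expec p (TH H G)) ^ 2)
      = ((Nat.card (H ≃g H) : ℝ)⁻¹) ^ 2 * ∑ s : Fin k ↪ V, ∑ s' : Fin k ↪ V,
          MH H G s * MH H G s' *
            (p ^ ((Finset.univ.map s ∪ Finset.univ.map s').card) - p ^ (2 * k)) := by
  rw [var_decomp, expec_TH_sq, expec_TH]
  rw [mul_pow, pow_two (∑ s : Fin k ↪ V, MH H G s * p ^ k), Finset.sum_mul_sum]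
  rw [← mul_sub, ← Finset.sum_sub_distrib]
  congr 1
  apply Finset.sum_congr rfl; intro s _
  rw [← Finset.sum_sub_distrib]
  apply Finset.sum_congr rfl; intro s' _
  rw [two_mul, pow_add]
  ring

lemma tH_sq (A : Finset V) :
    tH H G A ^ 2 = ((Nat.card (H ≃g H) : ℝ)⁻¹) ^ 2 * ∑ s : Fin k ↪ V, ∑ s' : Fin k ↪ V,
      MH H G s * MH H G s' *
        (if A ⊆ Finset.univ.map s ∩ Finset.univ.map s' then (1:ℝ) else 0) := by
  rw [tH, Finset.sum_filter, mul_pow,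
    pow_two (∑ s : Fin k ↪ V, if A ⊆ Finset.univ.map s then MH H G s else 0),
    Finset.sum_mul_sum]
  congr 1
  apply Finset.sum_congr rfl; intro s _
  apply Finset.sum_congr rfl; intro s' _
  simp only [Finset.subset_inter_iff]
  by_cases h1 : A ⊆ Finset.univ.map s <;> by_cases h2 : A ⊆ Finset.univ.map s' <;>
    simp [h1, h2]

lemma sum_tH_sq (K : ℕ) :
    ∑ A ∈ (Finset.univ : Finset (Finset V)).filter (fun A => A.card = K), tH H G A ^ 2
      = ((Nat.card (H ≃g H) : ℝ)⁻¹) ^ 2 * ∑ s : Fin k ↪ V, ∑ s' : Fin k ↪ V,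
          MH H G s * MH H G s' *
            (((Finset.univ.map s ∩ Finset.univ.map s').card.choose K : ℕ) : ℝ) := by
  simp only [tH_sq]
  rw [← Finset.mul_sum]
  congr 1
  rw [Finset.sum_comm]
  apply Finset.sum_congr rfl; intro s _
  rw [Finset.sum_comm]
  apply Finset.sum_congr rfl; intro s' _
  rw [← Finset.mul_sum]
  congr 1
  rw [Finset.sum_boole]
  have h : (Finset.filter (fun A : Finset V => A ⊆ Finset.univ.map s ∩ Finset.univ.map s')
      (Finset.filter (fun A : Finset V => A.card = K) Finset.univ))
        = Finset.powersetCard K (Finset.univ.map s ∩ Finset.univ.map s') := by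
    ext A
    simp [Finset.mem_powersetCard, and_comm]
  rw [h, Finset.card_powersetCard]

lemma beta_eq (p : ℝ) :
    betaH H G p
      = ((Nat.card (H ≃g H) : ℝ)⁻¹) ^ 2 * ∑ s : Fin k ↪ V, ∑ s' : Fin k ↪ V,
          MH H G s * MH H G s' *
            ∑ K ∈ Finset.Icc 1 k, p ^ (2 * k - K) *
              (((Finset.univ.map s ∩ Finset.univ.map s').card.choose K : ℕ) : ℝ) := by
  unfold betaH
  simp only [sum_tH_sq]
  simp only [Finset.mul_sum]
  rw [Finset.sum_comm]
  apply Finset.sum_congr rfl; intro s _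
  rw [Finset.sum_comm]
  apply Finset.sum_congr rfl; intro s' _
  apply Finset.sum_congr rfl; intro K _
  ring

end Formulas

lemma choose_sum_Icc (k m : ℕ) (hm : m ≤ k) :
    ∑ K ∈ Finset.Icc 1 k, ((m.choose K : ℕ) : ℝ) = 2 ^ m - 1 := by
  have h0 : (0 : ℕ) ∉ Finset.Icc 1 k := by simp
  have hins : insert 0 (Finset.Icc 1 k) = Finset.range (k + 1) := by
    ext x; simp [Nat.lt_succ_iff]; omega
  have hN : ∑ K ∈ Finset.range (k + 1), m.choose K = 2 ^ m := by
    rw [← Nat.sum_range_choose m]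
    symm
    apply Finset.sum_subset
    · intro x hx; simp at hx ⊢; omega
    · intro x hx hnx
      simp at hx hnx
      exact Nat.choose_eq_zero_of_lt (by omega)
  have hR : ∑ K ∈ Finset.range (k + 1), ((m.choose K : ℕ) : ℝ) = 2 ^ m := by
    rw [← Nat.cast_sum, hN]; push_cast; ring
  rw [← hins, Finset.sum_insert h0] at hR
  simp at hR
  linarith

lemma key_upper (p : ℝ) (hp0 : 0 ≤ p) (k u m : ℕ) (hm : m ≤ k) (hum : u + m = 2 * k) :
    p ^ u - p ^ (2 * k) ≤ ∑ K ∈ Finset.Icc 1 k, p ^ (2 * k - K) * ((m.choose K : ℕ) : ℝ) := by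
  rcases Nat.eq_zero_or_pos m with hm0 | hm1
  · have hu : u = 2 * k := by omega
    rw [hu, sub_self]
    apply Finset.sum_nonneg
    intro K _; positivity
  · have hmem : m ∈ Finset.Icc 1 k := by simp; omega
    have h1 : p ^ (2 * k - m) * ((m.choose m : ℕ) : ℝ)
        ≤ ∑ K ∈ Finset.Icc 1 k, p ^ (2 * k - K) * ((m.choose K : ℕ) : ℝ) :=
      Finset.single_le_sum (f := fun K => p ^ (2 * k - K) * ((m.choose K : ℕ) : ℝ))
        (fun i _ => by positivity) hmem
    have hu : u = 2 * k - m := by omega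
    calc p ^ u - p ^ (2 * k) ≤ p ^ u := by
          have : 0 ≤ p ^ (2 * k) := pow_nonneg hp0 _
          linarith
      _ = p ^ (2 * k - m) * ((m.choose m : ℕ) : ℝ) := by
          rw [Nat.choose_self, hu]; norm_num
      _ ≤ _ := h1

lemma key_lower (p : ℝ) (hp0 : 0 ≤ p) (hp1 : p ≤ 1) (k u m : ℕ) (hk : 1 ≤ k) (hm : m ≤ k)
    (hum : u + m = 2 * k) :
    (1 - p) * ∑ K ∈ Finset.Icc 1 k, p ^ (2 * k - K) * ((m.choose K : ℕ) : ℝ)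
      ≤ ((2 : ℝ) ^ k - 1) * (p ^ u - p ^ (2 * k)) := by
  have hS : ∑ K ∈ Finset.Icc 1 k, p ^ (2 * k - K) * ((m.choose K : ℕ) : ℝ)
      ≤ p ^ u * ((2 : ℝ) ^ m - 1) := by
    have step1 : ∀ K ∈ Finset.Icc 1 k,
        p ^ (2 * k - K) * ((m.choose K : ℕ) : ℝ) ≤ p ^ u * ((m.choose K : ℕ) : ℝ) := by
      intro K hK
      simp only [Finset.mem_Icc] at hK
      rcases le_or_gt K m with h | h
      · apply mul_le_mul_of_nonneg_right _ (by positivity)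
        apply pow_le_pow_of_le_one hp0 hp1
        omega
      · rw [Nat.choose_eq_zero_of_lt h]
        simp
    calc ∑ K ∈ Finset.Icc 1 k, p ^ (2 * k - K) * ((m.choose K : ℕ) : ℝ)
        ≤ ∑ K ∈ Finset.Icc 1 k, p ^ u * ((m.choose K : ℕ) : ℝ) := Finset.sum_le_sum step1
      _ = p ^ u * ∑ K ∈ Finset.Icc 1 k, ((m.choose K : ℕ) : ℝ) := by rw [Finset.mul_sum]
      _ = p ^ u * ((2 : ℝ) ^ m - 1) := by rw [choose_sum_Icc k m hm]
  have hp2k : p ^ (2 * k) = p ^ u * p ^ m := by rw [← pow_add]; congr 1; omega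
  have h1p : (0:ℝ) ≤ 1 - p := by linarith
  have hpu : (0:ℝ) ≤ p ^ u := pow_nonneg hp0 _
  rcases Nat.eq_zero_or_pos m with hm0 | hm1
  · subst hm0
    have hu : u = 2 * k := by omega
    norm_num at hS
    have hS1 : 0 ≤ ∑ K ∈ Finset.Icc 1 k, p ^ (2 * k - K) * ((Nat.choose 0 K : ℕ) : ℝ) :=
      Finset.sum_nonneg fun K _ => by positivity
    have hz : ∑ K ∈ Finset.Icc 1 k, p ^ (2 * k - K) * ((Nat.choose 0 K : ℕ) : ℝ) = 0 :=
      le_antisymm hS hS1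
    rw [hz, hu, sub_self]
    norm_num
  · have e1 : p ^ m ≤ p := pow_le_of_le_one hp0 hp1 (by omega)
    have e1' : p ^ m ≤ 1 := pow_le_one₀ hp0 hp1
    have e2 : (2 : ℝ) ^ m ≤ 2 ^ k := pow_le_pow_right₀ (by norm_num) hm
    have e2' : (1 : ℝ) ≤ 2 ^ m := one_le_pow₀ (by norm_num)
    have e3 : (1 - p) * ((2 : ℝ) ^ m - 1) ≤ ((2 : ℝ) ^ k - 1) * (1 - p ^ m) := by
      have := mul_le_mul (show (1:ℝ) - p ≤ 1 - p ^ m by linarith)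
        (show (2:ℝ) ^ m - 1 ≤ 2 ^ k - 1 by linarith) (by linarith) (by linarith)
      linarith
    calc (1 - p) * ∑ K ∈ Finset.Icc 1 k, p ^ (2 * k - K) * ((m.choose K : ℕ) : ℝ)
        ≤ (1 - p) * (p ^ u * ((2 : ℝ) ^ m - 1)) := mul_le_mul_of_nonneg_left hS h1p
      _ = p ^ u * ((1 - p) * ((2 : ℝ) ^ m - 1)) := by ring
      _ ≤ p ^ u * (((2 : ℝ) ^ k - 1) * (1 - p ^ m)) := mul_le_mul_of_nonneg_left e3 hpu
      _ = ((2 : ℝ) ^ k - 1) * (p ^ u - p ^ (2 * k)) := by rw [hp2k]; ring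
/-- `(1-p) β_H(p)/(2^{|V(H)|} - 1) ≤ Var[T(H,G)] ≤ β_H(p)`. -/
theorem stmt9 {k : ℕ} {V : Type*} [Fintype V] [DecidableEq V]
    (H : SimpleGraph (Fin k)) [DecidableRel H.Adj] (hconn : H.Connected)
    (G : SimpleGraph V) [DecidableRel G.Adj]
    (p : ℝ) (hp0 : 0 < p) (hp1 : p < 1) :
    (1 - p) * betaH H G p / ((2 : ℝ) ^ k - 1) ≤
        expec p (fun ω => (TH H G ω - expec p (TH H G)) ^ 2) ∧
      expec p (fun ω => (TH H G ω - expec p (TH H G)) ^ 2) ≤ betaH H G p := by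
  
  have hk : 1 ≤ k := Fin.pos_iff_nonempty.mpr hconn.nonempty
  have h2k : (0:ℝ) < 2 ^ k - 1 := by
    have : (1:ℝ) < 2 ^ k := one_lt_pow₀ (by norm_num) (by omega)
    linarith
  have hc2 : (0:ℝ) ≤ ((Nat.card (H ≃g H) : ℝ)⁻¹) ^ 2 := by positivity
  have hMM : ∀ s s' : Fin k ↪ V, 0 ≤ MH H G s * MH H G s' :=
    fun s s' => mul_nonneg (MH_nonneg H G s) (MH_nonneg H G s')
  have hcard : ∀ s s' : Fin k ↪ V,
      (Finset.univ.map s ∪ Finset.univ.map s').card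
        + (Finset.univ.map s ∩ Finset.univ.map s').card = 2 * k
        ∧ (Finset.univ.map s ∩ Finset.univ.map s').card ≤ k := by
    intro s s'
    have h1 := Finset.card_union_add_card_inter (Finset.univ.map s) (Finset.univ.map s')
    rw [card_map_univ, card_map_univ] at h1
    have h2 : (Finset.univ.map s ∩ Finset.univ.map s').card ≤ (Finset.univ.map s).card :=
      Finset.card_le_card Finset.inter_subset_left
    rw [card_map_univ] at h2
    exact ⟨by omega, h2⟩
  rw [var_eq, beta_eq]
  constructor
  · rw [div_le_iff₀ h2k]
    calc (1 - p) * (((Nat.card (H ≃g H) : ℝ)⁻¹) ^ 2 * ∑ s : Fin k ↪ V, ∑ s' : Fin k ↪ V,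
          MH H G s * MH H G s' *
            ∑ K ∈ Finset.Icc 1 k, p ^ (2 * k - K) *
              (((Finset.univ.map s ∩ Finset.univ.map s').card.choose K : ℕ) : ℝ))
        = ((Nat.card (H ≃g H) : ℝ)⁻¹) ^ 2 * ∑ s : Fin k ↪ V, ∑ s' : Fin k ↪ V,
            MH H G s * MH H G s' *
              ((1 - p) * ∑ K ∈ Finset.Icc 1 k, p ^ (2 * k - K) *
                (((Finset.univ.map s ∩ Finset.univ.map s').card.choose K : ℕ) : ℝ)) := by
          simp only [Finset.mul_sum]
          apply Finset.sum_congr rfl; intro s _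
          apply Finset.sum_congr rfl; intro s' _
          apply Finset.sum_congr rfl; intro K _
          ring
      _ ≤ ((Nat.card (H ≃g H) : ℝ)⁻¹) ^ 2 * ∑ s : Fin k ↪ V, ∑ s' : Fin k ↪ V,
            MH H G s * MH H G s' *
              (((2:ℝ) ^ k - 1) *
                (p ^ ((Finset.univ.map s ∪ Finset.univ.map s').card) - p ^ (2 * k))) := by
          apply mul_le_mul_of_nonneg_left _ hc2
          apply Finset.sum_le_sum; intro s _
          apply Finset.sum_le_sum; intro s' _
          apply mul_le_mul_of_nonneg_left _ (hMM s s')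
          exact key_lower p hp0.le hp1.le k _ _ hk (hcard s s').2 (hcard s s').1
      _ = (((Nat.card (H ≃g H) : ℝ)⁻¹) ^ 2 * ∑ s : Fin k ↪ V, ∑ s' : Fin k ↪ V,
            MH H G s * MH H G s' *
              (p ^ ((Finset.univ.map s ∪ Finset.univ.map s').card) - p ^ (2 * k)))
            * (2 ^ k - 1) := by
          simp only [Finset.mul_sum, Finset.sum_mul]
          apply Finset.sum_congr rfl; intro s _
          apply Finset.sum_congr rfl; intro s' _
          ring
  · apply mul_le_mul_of_nonneg_left _ hc2
    apply Finset.sum_le_sum; intro s _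
    apply Finset.sum_le_sum; intro s' _
    apply mul_le_mul_of_nonneg_left _ (hMM s s')
    exact key_upper p hp0.le k _ _ (hcard s s').2 (hcard s s').1
end
end
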